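/- Let n be a positive integer, s ∈ (0,1), and p, q > 1 real numbers satisfying 1 - 2s/n < 1/p + 1/q < 1, and additionally, if n > 4s, also 1/p > (n-4s)/(2n) and 1/q > (n-4s)/(2n). Then there exists θ ∈ (0,2) such that p < 2n/(n - 2sθ) and q < 2n/(n - 2s(2-θ)), where these right-hand sides are interpreted as +∞ when the denominators are ≤ 0. -/

import Mathlib

/-! With `A = (1/2 - 1/p) n` and `B = (1/2 - 1/q) n`, the conditions on `θ` read `A < sθ` and
`B < s(2 - θ)`, i.e. `sθ ∈ (A, 2s - B)`, to be intersected with `(0, 2s)`. The four endpoint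
comparisons `0 < 2s`, `A < 2s`, `B < 2s` and `A + B < 2s` are the hypotheses on `s`, `p`, `q`
(`A < 2s` and `B < 2s` are automatic unless `n > 4s`). -/

lemma sub_nonpos_or_lt_two_mul_div {n s θ p : ℝ} (hn : 0 < n) (hp : 0 < p)
    (h : (1/2 - 1/p) * n < s * θ) :
    n - 2*s*θ ≤ 0 ∨ p < 2*n / (n - 2*s*θ) := by
  refine (le_or_gt (n - 2*s*θ) 0).imp id fun hpos => ?_
  rw [lt_div_iff₀ hpos]
  have key : n - 2*s*θ < 2*n / p := by
    have : 2*n / p = n - 2 * ((1/2 - 1/p) * n) := by field_simp; ring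
    linarith
  rwa [lt_div_iff₀ hp, mul_comm] at key

lemma half_sub_inv_mul_lt {n s p : ℝ} (hn : 0 < n) (hp : 0 < p)
    (h : n > 4*s → 1/p > (n - 4*s)/(2*n)) :
    (1/2 - 1/p) * n < 2*s := by
  rcases le_or_gt n (4*s) with hle | hgt
  · have : 0 < 1/p * n := by positivity
    linarith
  · have := h hgt
    rw [gt_iff_lt, div_lt_iff₀ (by positivity)] at this
    linarith

theorem stmt_0 (n : ℕ) (hn : 0 < n) (s p q : ℝ)
    (hs : s ∈ Set.Ioo (0:ℝ) 1) (hp : 1 < p) (hq : 1 < q)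
    (hpq : 1 - 2*s/(n:ℝ) < 1/p + 1/q ∧ 1/p + 1/q < 1)
    (hpq1 : (n:ℝ) > 4*s → 1/p > ((n:ℝ) - 4*s)/(2*(n:ℝ)) ∧ 1/q > ((n:ℝ) - 4*s)/(2*(n:ℝ))) :
    ∃ θ ∈ Set.Ioo (0:ℝ) 2,
      ((n:ℝ) - 2*s*θ ≤ 0 ∨ p < 2*(n:ℝ)/((n:ℝ) - 2*s*θ)) ∧
      ((n:ℝ) - 2*s*(2-θ) ≤ 0 ∨ q < 2*(n:ℝ)/((n:ℝ) - 2*s*(2-θ))) := by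
  have hn' : (0:ℝ) < n := by exact_mod_cast hn
  have hs0 : 0 < s := hs.1
  have hp0 : 0 < p := one_pos.trans hp
  have hq0 : 0 < q := one_pos.trans hq
  have hA : (1/2 - 1/p) * n < 2*s := half_sub_inv_mul_lt hn' hp0 fun h => (hpq1 h).1
  have hB : (1/2 - 1/q) * n < 2*s := half_sub_inv_mul_lt hn' hq0 fun h => (hpq1 h).2
  have hAB : (1/2 - 1/p) * n + (1/2 - 1/q) * n < 2*s := by
    have := hpq.1
    rw [sub_lt_comm, lt_div_iff₀ hn'] at this
    linarith
  obtain ⟨u, hu_lo, hu_hi⟩ :=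
    exists_between (max_lt_iff.2 ⟨lt_min (by positivity) (by linarith), lt_min hA (by linarith)⟩ :
      max 0 ((1/2 - 1/p) * n) < min (2*s) (2*s - (1/2 - 1/q) * n))
  rw [max_lt_iff] at hu_lo
  rw [lt_min_iff] at hu_hi
  have hsu : s * (u / s) = u := mul_div_cancel₀ u hs0.ne'
  refine ⟨u / s, ⟨div_pos hu_lo.1 hs0, (div_lt_iff₀ hs0).2 (by linarith)⟩,
    sub_nonpos_or_lt_two_mul_div hn' hp0 (by rw [hsu]; exact hu_lo.2),
    sub_nonpos_or_lt_two_mul_div hn' hq0 (by rw [mul_sub, hsu]; linarith [hu_hi.2])⟩
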